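/- Let b be a connected, canonically compactifiable graph over a finite discrete measure space (X,m). Then there exists a constant C > 0 such that ‖u − ū‖₂² ≤ C Q(u) for every u ∈ D(Q), where ū denotes the mean of u. -/

import Mathlib

open scoped BigOperators

/-- `u` is square-summable with respect to the measure `m`, i.e. `u ∈ ℓ²(X,m)`. -/
def MemL2 {X : Type*} (m : X → ℝ) (u : X → ℝ) : Prop :=
  Summable (fun x => u x ^ 2 * m x)

/-- `u` has finite energy: the sum defining `Q̃(u)` converges. -/
def FinEnergy {X : Type*} (b : X → X → ℝ) (u : X → ℝ) : Prop :=
  Summable (fun p : X × X => b p.1 p.2 * (u p.1 - u p.2) ^ 2)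

/-- The energy `Q(u) = (1/2) Σ_{x,y} b(x,y) (u(x) - u(y))²`. -/
noncomputable def energy {X : Type*} (b : X → X → ℝ) (u : X → ℝ) : ℝ :=
  (1 / 2) * ∑' p : X × X, b p.1 p.2 * (u p.1 - u p.2) ^ 2

/-- The bilinear energy form `Q(u,v) = (1/2) Σ_{x,y} b(x,y)(u(x)-u(y))(v(x)-v(y))`. -/
noncomputable def energyBil {X : Type*} (b : X → X → ℝ) (u v : X → ℝ) : ℝ :=
  (1 / 2) * ∑' p : X × X, b p.1 p.2 * (u p.1 - u p.2) * (v p.1 - v p.2)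

/-- The form domain `D(Q) = ℓ²(X,m) ∩ D̃`. -/
def MemDQ {X : Type*} (b : X → X → ℝ) (m : X → ℝ) (u : X → ℝ) : Prop :=
  MemL2 m u ∧ FinEnergy b u

/-- The form norm `‖u‖_Q = (Q(u) + ‖u‖₂²)^{1/2}`. -/
noncomputable def formNorm {X : Type*} (b : X → X → ℝ) (m : X → ℝ) (u : X → ℝ) : ℝ :=
  Real.sqrt (energy b u + ∑' x, u x ^ 2 * m x)

/-- `b` is a graph over `X`: symmetric, nonnegative, zero on the diagonal,
with summable rows. -/
structure IsGraph {X : Type*} (b : X → X → ℝ) : Prop where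
  symm : ∀ x y, b x y = b y x
  nonneg : ∀ x y, 0 ≤ b x y
  diag : ∀ x, b x x = 0
  row_summable : ∀ x, Summable (fun y => b x y)

/-- The graph `b` is connected: any two points are joined by a path of edges of
positive weight. -/
def GraphConnected {X : Type*} (b : X → X → ℝ) : Prop :=
  ∀ x y : X, Relation.ReflTransGen (fun a c => 0 < b a c) x y

/-- `(X,m)` is a finite discrete measure space: `m > 0` everywhere and `m(X) < ∞`. -/
structure FinMeasure {X : Type*} (m : X → ℝ) : Prop where
  pos : ∀ x, 0 < m x
  summable : Summable m

/-- The graph `b` over `(X,m)` is canonically compactifiable: every function in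
`D(Q)` is bounded. -/
def CanCompact {X : Type*} (b : X → X → ℝ) (m : X → ℝ) : Prop :=
  ∀ u : X → ℝ, MemDQ b m u → ∃ M : ℝ, ∀ x, |u x| ≤ M

/-- `u ∈ D(L)` with `L u = f` for the Neumann Laplacian `L`:
`u ∈ D(Q)`, `f ∈ ℓ²(X,m)` and `Q(u,v) = ⟨f,v⟩` for all `v ∈ D(Q)`. -/
def IsLap {X : Type*} (b : X → X → ℝ) (m : X → ℝ) (u f : X → ℝ) : Prop :=
  MemDQ b m u ∧ MemL2 m f ∧
    ∀ v : X → ℝ, MemDQ b m v → energyBil b u v = ∑' x, f x * v x * m x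

/-- The mean `ū = ⟨u,1⟩ / m(X)`. -/
noncomputable def mean {X : Type*} (m : X → ℝ) (u : X → ℝ) : ℝ :=
  (∑' x, u x * m x) / (∑' x, m x)
open Filter Topology

section Helpers

variable {X : Type*}

lemma le_of_sq_le_sq' {a b : ℝ} (hb : 0 ≤ b) (h : a ^ 2 ≤ b ^ 2) : a ≤ b := by
  nlinarith [sq_nonneg (a + b)]

lemma energy_term_nonneg (b : X → X → ℝ) (hb : IsGraph b) (u : X → ℝ) (p : X × X) :
    0 ≤ b p.1 p.2 * (u p.1 - u p.2) ^ 2 :=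
  mul_nonneg (hb.nonneg _ _) (sq_nonneg _)

lemma energy_nonneg (b : X → X → ℝ) (hb : IsGraph b) (u : X → ℝ) : 0 ≤ energy b u := by
  unfold energy
  have : 0 ≤ ∑' p : X × X, b p.1 p.2 * (u p.1 - u p.2) ^ 2 := tsum_nonneg (energy_term_nonneg b hb u)
  linarith

lemma l2sum_nonneg (m : X → ℝ) (hm : FinMeasure m) (u : X → ℝ) :
    0 ≤ ∑' x, u x ^ 2 * m x :=
  tsum_nonneg fun x => mul_nonneg (sq_nonneg _) (hm.pos x).le

/-- single energy term bounded by twice the energy -/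
lemma term_le_two_energy (b : X → X → ℝ) (hb : IsGraph b) {u : X → ℝ}
    (hu : FinEnergy b u) (x y : X) :
    b x y * (u x - u y) ^ 2 ≤ 2 * energy b u := by
  have h := Summable.le_tsum hu (x, y) (fun j _ => energy_term_nonneg b hb u j)
  unfold energy
  linarith

/-- pointwise evaluation bound by the ℓ² norm -/
lemma eval_sq_le (m : X → ℝ) (hm : FinMeasure m) {u : X → ℝ} (hu : MemL2 m u) (x : X) :
    u x ^ 2 ≤ (∑' y, u y ^ 2 * m y) / m x := by
  rw [le_div_iff₀ (hm.pos x)]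
  exact Summable.le_tsum hu x fun j _ => mul_nonneg (sq_nonneg _) (hm.pos j).le

/-- Cauchy–Schwarz with geometric weights. -/
lemma cs2 (a : ℕ → ℝ) (ha : ∀ n, 0 ≤ a n) (h : Summable fun n => 2 ^ n * a n ^ 2) :
    Summable a ∧ (∑' n, a n) ^ 2 ≤ 2 * ∑' n, 2 ^ n * a n ^ 2 := by
  set T := ∑' n, 2 ^ n * a n ^ 2 with hT
  have hTnn : 0 ≤ T := tsum_nonneg fun n => mul_nonneg (by positivity) (sq_nonneg _)
  have hgeo : Summable fun n : ℕ => ((2:ℝ)⁻¹) ^ n :=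
    summable_geometric_of_lt_one (by norm_num) (by norm_num)
  have hgeot : ∑' n : ℕ, ((2:ℝ)⁻¹) ^ n = 2 := by
    rw [tsum_geometric_of_lt_one (by norm_num) (by norm_num)]; norm_num
  have key : ∀ s : Finset ℕ, (∑ n ∈ s, a n) ^ 2 ≤ 2 * T := by
    intro s
    have hfg : ∀ n, a n = Real.sqrt ((2:ℝ)⁻¹ ^ n) * Real.sqrt (2 ^ n * a n ^ 2) := by
      intro n
      rw [← Real.sqrt_mul (by positivity)]
      have : (2:ℝ)⁻¹ ^ n * (2 ^ n * a n ^ 2) = a n ^ 2 := by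
        field_simp
        rw [← mul_pow]; norm_num
      rw [this, Real.sqrt_sq (ha n)]
    calc (∑ n ∈ s, a n) ^ 2
        = (∑ n ∈ s, Real.sqrt ((2:ℝ)⁻¹ ^ n) * Real.sqrt (2 ^ n * a n ^ 2)) ^ 2 := by
          congr 1; exact Finset.sum_congr rfl fun n _ => hfg n
      _ ≤ (∑ n ∈ s, Real.sqrt ((2:ℝ)⁻¹ ^ n) ^ 2) * ∑ n ∈ s, Real.sqrt (2 ^ n * a n ^ 2) ^ 2 :=
          Finset.sum_mul_sq_le_sq_mul_sq s _ _
      _ ≤ 2 * T := by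
          have h1 : ∑ n ∈ s, Real.sqrt ((2:ℝ)⁻¹ ^ n) ^ 2 ≤ 2 := by
            have : ∀ n ∈ s, Real.sqrt ((2:ℝ)⁻¹ ^ n) ^ 2 = ((2:ℝ)⁻¹) ^ n := fun n _ =>
              Real.sq_sqrt (by positivity)
            rw [Finset.sum_congr rfl this]
            exact le_trans (Summable.sum_le_tsum s (fun n _ => by positivity) hgeo) (le_of_eq hgeot)
          have h2 : ∑ n ∈ s, Real.sqrt (2 ^ n * a n ^ 2) ^ 2 ≤ T := by
            have : ∀ n ∈ s, Real.sqrt ((2:ℝ) ^ n * a n ^ 2) ^ 2 = 2 ^ n * a n ^ 2 := fun n _ =>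
              Real.sq_sqrt (by positivity)
            rw [Finset.sum_congr rfl this]
            exact Summable.sum_le_tsum s (fun n _ => mul_nonneg (by positivity) (sq_nonneg _)) h
          have h1' : 0 ≤ ∑ n ∈ s, Real.sqrt ((2:ℝ)⁻¹ ^ n) ^ 2 :=
            Finset.sum_nonneg fun n _ => sq_nonneg _
          have h2' : 0 ≤ ∑ n ∈ s, Real.sqrt ((2:ℝ) ^ n * a n ^ 2) ^ 2 :=
            Finset.sum_nonneg fun n _ => sq_nonneg _
          nlinarith
  have hsummable : Summable a := by
    apply summable_of_sum_le (fun n => ha n) (c := Real.sqrt (2 * T))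
    intro s
    exact le_of_sq_le_sq' (Real.sqrt_nonneg _)
      (by rw [Real.sq_sqrt (by linarith)]; exact key s)
  refine ⟨hsummable, ?_⟩
  have : ∑' n, a n ≤ Real.sqrt (2 * T) :=
    Summable.tsum_le_of_sum_le hsummable fun s =>
      le_of_sq_le_sq' (Real.sqrt_nonneg _) (by rw [Real.sq_sqrt (by linarith)]; exact key s)
  have hnn : 0 ≤ ∑' n, a n := tsum_nonneg ha
  nlinarith [Real.sq_sqrt (show (0:ℝ) ≤ 2 * T by linarith), Real.sqrt_nonneg (2*T)]

/-- energy of |v| is dominated termwise by energy of v -/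
lemma abs_energy_term_le (b : X → X → ℝ) (hb : IsGraph b) (v : X → ℝ) (p : X × X) :
    b p.1 p.2 * (|v p.1| - |v p.2|) ^ 2 ≤ b p.1 p.2 * (v p.1 - v p.2) ^ 2 := by
  apply mul_le_mul_of_nonneg_left _ (hb.nonneg _ _)
  have h1 := abs_sub_abs_le_abs_sub (v p.1) (v p.2)
  have h2 := abs_sub_abs_le_abs_sub (v p.2) (v p.1)
  have := abs_sub_comm (v p.2) (v p.1)
  have habs : |v p.1 - v p.2| ^ 2 = (v p.1 - v p.2) ^ 2 := sq_abs _
  nlinarith [abs_nonneg (v p.1 - v p.2)]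

lemma tail_small {f : X → ℝ} (hf : Summable f) {ε : ℝ} (hε : 0 < ε) :
    ∃ s : Finset X, |∑' x : {x // x ∉ s}, f x| < ε := by
  have h1 := tendsto_tsum_compl_atTop_zero (α := X) f
  have h2 : ∀ᶠ y in 𝓝 (0:ℝ), |y| < ε := by
    have := Metric.ball_mem_nhds (0:ℝ) hε
    simpa [Real.ball_eq_Ioo, Set.mem_Ioo, abs_lt, Filter.eventually_iff, Set.Ioo_def] using this
  exact (h1.eventually h2).exists

end Helpers
section Helpers2

open Filter Topology

variable {X : Type*}

/-- scaling the function scales the energy terms -/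
lemma energy_term_smul (b : X → X → ℝ) (u : X → ℝ) (t : ℝ) :
    (fun p : X × X => b p.1 p.2 * (t * u p.1 - t * u p.2) ^ 2)
      = fun p : X × X => t ^ 2 * (b p.1 p.2 * (u p.1 - u p.2) ^ 2) := by
  funext p; ring

lemma finEnergy_smul (b : X → X → ℝ) {u : X → ℝ} (hu : FinEnergy b u) (t : ℝ) :
    FinEnergy b (fun x => t * u x) := by
  unfold FinEnergy
  simpa [energy_term_smul] using hu.mul_left (t ^ 2)

lemma energy_smul (b : X → X → ℝ) (u : X → ℝ) (t : ℝ) :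
    energy b (fun x => t * u x) = t ^ 2 * energy b u := by
  unfold energy
  rw [show (fun p : X × X => b p.1 p.2 * ((fun x => t * u x) p.1 - (fun x => t * u x) p.2) ^ 2)
      = fun p : X × X => t ^ 2 * (b p.1 p.2 * (u p.1 - u p.2) ^ 2) from energy_term_smul b u t,
    tsum_mul_left]
  ring

lemma finEnergy_sub_const (b : X → X → ℝ) {u : X → ℝ} (hu : FinEnergy b u) (c : ℝ) :
    FinEnergy b (fun x => u x - c) := by
  unfold FinEnergy at *
  convert hu using 2 with p
  ring

lemma energy_sub_const (b : X → X → ℝ) (u : X → ℝ) (c : ℝ) :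
    energy b (fun x => u x - c) = energy b u := by
  unfold energy
  congr 1
  apply tsum_congr
  intro p
  ring

lemma memL2_sub_const (m : X → ℝ) (hm : FinMeasure m) {u : X → ℝ} (hu : MemL2 m u) (c : ℝ) :
    MemL2 m (fun x => u x - c) := by
  unfold MemL2 at *
  refine Summable.of_nonneg_of_le (fun x => mul_nonneg (sq_nonneg _) (hm.pos x).le)
    (fun x => ?_) ((hu.mul_left 2).add (hm.summable.mul_left (2 * c ^ 2)))
  have h1 : (u x - c) ^ 2 ≤ 2 * u x ^ 2 + 2 * c ^ 2 := by nlinarith [sq_nonneg (u x + c)]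
  have := mul_le_mul_of_nonneg_right h1 (hm.pos x).le
  show (u x - c) ^ 2 * m x ≤ 2 * (u x ^ 2 * m x) + 2 * c ^ 2 * m x
  nlinarith

lemma memL2_smul (m : X → ℝ) {u : X → ℝ} (hu : MemL2 m u) (t : ℝ) :
    MemL2 m (fun x => t * u x) := by
  unfold MemL2 at *
  have : (fun x => (t * u x) ^ 2 * m x) = fun x => t ^ 2 * (u x ^ 2 * m x) := by
    funext x; ring
  rw [this]
  exact hu.mul_left _

lemma l2_smul_sum (m : X → ℝ) (u : X → ℝ) (t : ℝ) :
    ∑' x, (t * u x) ^ 2 * m x = t ^ 2 * ∑' x, u x ^ 2 * m x := by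
  rw [show (fun x => (t * u x) ^ 2 * m x) = fun x => t ^ 2 * (u x ^ 2 * m x) by funext x; ring,
    tsum_mul_left]

/-- `u · m` is summable when `u ∈ ℓ²` and `m` finite -/
lemma summable_mul_m (m : X → ℝ) (hm : FinMeasure m) {u : X → ℝ} (hu : MemL2 m u) :
    Summable (fun x => u x * m x) := by
  apply Summable.of_abs
  refine Summable.of_nonneg_of_le (fun x => abs_nonneg _)
    (fun x => ?_) ((hu.add hm.summable).div_const 2)
  rw [abs_mul, abs_of_pos (hm.pos x)]
  have h1 : |u x| ≤ (u x ^ 2 + 1) / 2 := by nlinarith [sq_nonneg (|u x| - 1), sq_abs (u x)]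
  have := mul_le_mul_of_nonneg_right h1 (hm.pos x).le
  nlinarith

/-- ultrafilter limit of a bounded real sequence -/
lemma ultra_lim (F : Ultrafilter ℕ) {M : ℝ} (a : ℕ → ℝ) (ha : ∀ n, |a n| ≤ M) :
    ∃ L : ℝ, |L| ≤ M ∧ Tendsto a F (nhds L) := by
  have hc : IsCompact (Set.Icc (-M) M) := isCompact_Icc
  have hle : ↑(F.map a) ≤ Filter.principal (Set.Icc (-M) M) := by
    rw [Ultrafilter.coe_map, Filter.le_principal_iff, Filter.mem_map]
    filter_upwards [] with n
    exact Set.mem_Icc.mpr (abs_le.mp (ha n))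
  obtain ⟨L, hL, hFle⟩ := hc.ultrafilter_le_nhds (F.map a) hle
  exact ⟨L, abs_le.mpr ⟨hL.1, hL.2⟩, hFle⟩

end Helpers2
section Helpers3

open Filter Topology

variable {Y : Type*}

lemma tsum_swap_bound (h : ℕ → Y → ℝ) (C : ℕ → ℝ)
    (h0 : ∀ n y, 0 ≤ h n y) (hsum : ∀ n, Summable (h n)) (hC : ∀ n, ∑' y, h n y ≤ C n)
    (hCs : Summable C) (hsumy : ∀ y, Summable (fun n => h n y)) (S : Finset Y) :
    ∑ y ∈ S, (∑' n, h n y) ≤ ∑' n, C n := by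
  rw [← Summable.tsum_finsetSum (f := fun (y : Y) (n : ℕ) => h n y) (fun y _ => hsumy y)]
  have hle : ∀ n, ∑ y ∈ S, h n y ≤ C n := fun n =>
    le_trans (Summable.sum_le_tsum S (fun y _ => h0 n y) (hsum n)) (hC n)
  exact Summable.tsum_le_tsum hle
    (Summable.of_nonneg_of_le (fun n => Finset.sum_nonneg fun y _ => h0 n y) hle hCs) hCs

lemma summable_of_dom (f : Y → ℝ) (h : ℕ → Y → ℝ) (C : ℕ → ℝ)
    (hf0 : ∀ y, 0 ≤ f y) (hdom : ∀ y, f y ≤ ∑' n, h n y)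
    (h0 : ∀ n y, 0 ≤ h n y) (hsum : ∀ n, Summable (h n)) (hC : ∀ n, ∑' y, h n y ≤ C n)
    (hCs : Summable C) (hsumy : ∀ y, Summable (fun n => h n y)) :
    Summable f := by
  apply summable_of_sum_le hf0 (c := ∑' n, C n)
  intro S
  exact le_trans (Finset.sum_le_sum fun y _ => hdom y)
    (tsum_swap_bound h C h0 hsum hC hCs hsumy S)

lemma geo_half : Summable (fun n : ℕ => ((2:ℝ)⁻¹) ^ n) :=
  summable_geometric_of_lt_one (by norm_num) (by norm_num)

lemma two_mul_quarter (n : ℕ) : (2:ℝ) ^ n * (4:ℝ)⁻¹ ^ n = (2:ℝ)⁻¹ ^ n := by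
  rw [← mul_pow]; norm_num

end Helpers3
section Embed

open Filter Topology

/-- Part A: canonical compactifiability implies the form norm dominates the sup norm. -/
lemma embed {X : Type*} (b : X → X → ℝ) (m : X → ℝ) (hb : IsGraph b) (hm : FinMeasure m)
    (hcc : CanCompact b m) :
    ∃ K > (0:ℝ), ∀ u : X → ℝ, MemDQ b m u → ∀ x,
      u x ^ 2 ≤ K * (energy b u + ∑' y, u y ^ 2 * m y) := by
  by_contra hK
  push_neg at hK
  have hsel : ∀ n : ℕ, ∃ (v : X → ℝ) (x : X), MemDQ b m v ∧
      ((2:ℝ) ^ n * ((n:ℝ)+1) ^ 2) ^ 2 * (energy b v + ∑' y, v y ^ 2 * m y) < v x ^ 2 := by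
    intro n
    obtain ⟨u, hu, x, hx⟩ := hK (((2:ℝ) ^ n * ((n:ℝ)+1) ^ 2) ^ 2) (by positivity)
    exact ⟨u, x, hu, hx⟩
  choose v xs hv hvx using hsel
  set E : ℕ → ℝ := fun n => energy b (v n) + ∑' y, v n y ^ 2 * m y with hE
  have hE0 : ∀ n, 0 ≤ E n := fun n =>
    add_nonneg (energy_nonneg b hb (v n)) (l2sum_nonneg m hm (v n))
  have hl2E : ∀ n, ∑' y, v n y ^ 2 * m y ≤ E n := fun n =>
    le_add_of_nonneg_left (energy_nonneg b hb (v n))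
  have hEpos : ∀ n, 0 < E n := by
    intro n
    rcases lt_or_eq_of_le (hE0 n) with h | h
    · exact h
    · exfalso
      have hL2z : ∑' y, v n y ^ 2 * m y ≤ 0 := (hl2E n).trans (le_of_eq h.symm)
      have hxz : v n (xs n) ^ 2 ≤ 0 := by
        have := eval_sq_le m hm (hv n).1 (xs n)
        have h2 : (∑' y, v n y ^ 2 * m y) / m (xs n) ≤ 0 :=
          div_nonpos_of_nonpos_of_nonneg hL2z (hm.pos (xs n)).le
        linarith
      have hEe : energy b (v n) + ∑' y, v n y ^ 2 * m y = 0 := h.symm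
      have h2 := hvx n
      rw [hEe] at h2
      nlinarith [sq_nonneg (v n (xs n))]
  set t : ℕ → ℝ := fun n => ((2:ℝ) ^ n * ((n:ℝ)+1) * Real.sqrt (E n))⁻¹ with htdef
  have hsqrtE : ∀ n, 0 < Real.sqrt (E n) := fun n => Real.sqrt_pos.mpr (hEpos n)
  have ht : ∀ n, 0 < t n := by
    intro n
    show 0 < ((2:ℝ) ^ n * ((n:ℝ)+1) * Real.sqrt (E n))⁻¹
    exact inv_pos.mpr (mul_pos (by positivity) (hsqrtE n))
  set g : ℕ → X → ℝ := fun n y => t n * |v n y| with hgdef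
  have hg0 : ∀ n y, 0 ≤ g n y := fun n y => mul_nonneg (ht n).le (abs_nonneg _)
  have ht2 : ∀ n, t n ^ 2 * E n = (4:ℝ)⁻¹ ^ n * (((n:ℝ)+1) ^ 2)⁻¹ := by
    intro n
    have h4 : ((2:ℝ) ^ n) ^ 2 = 4 ^ n := by rw [← pow_mul, pow_mul']; norm_num
    have key : ((2:ℝ) ^ n * ((n:ℝ)+1) * Real.sqrt (E n)) ^ 2 = 4 ^ n * ((n:ℝ)+1) ^ 2 * E n := by
      rw [mul_pow, mul_pow, h4, Real.sq_sqrt (hE0 n)]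
    show ((2 ^ n * ((n:ℝ) + 1) * Real.sqrt (E n))⁻¹) ^ 2 * E n = (4:ℝ)⁻¹ ^ n * (((n:ℝ)+1) ^ 2)⁻¹
    rw [inv_pow, key, inv_pow]
    rw [mul_inv, mul_assoc, inv_mul_cancel₀ (hEpos n).ne', mul_one, mul_inv]
  -- ℓ² facts for g
  have hvabs_l2 : ∀ n, MemL2 m (fun y => |v n y|) := by
    intro n
    unfold MemL2
    have h : (fun y => |v n y| ^ 2 * m y) = fun y => v n y ^ 2 * m y := by
      funext y; rw [sq_abs]
    rw [h]; exact (hv n).1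
  have hgL2 : ∀ n, MemL2 m (g n) := by
    intro n
    simpa only [hgdef] using memL2_smul m (hvabs_l2 n) (t n)
  have hquarter : ∀ n : ℕ, (4:ℝ)⁻¹ ^ n * (((n:ℝ)+1) ^ 2)⁻¹ ≤ (4:ℝ)⁻¹ ^ n := by
    intro n
    have h1 : (1:ℝ) ≤ ((n:ℝ)+1) ^ 2 := by nlinarith [(by positivity : (0:ℝ) ≤ (n:ℝ))]
    have h2 : (((n:ℝ)+1) ^ 2)⁻¹ ≤ 1 := by
      rw [inv_le_one_iff₀]; right; exact h1
    have h3 : (0:ℝ) ≤ (4:ℝ)⁻¹ ^ n := by positivity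
    nlinarith
  have hgl2sum : ∀ n, ∑' y, g n y ^ 2 * m y ≤ (4:ℝ)⁻¹ ^ n := by
    intro n
    have h1 : ∑' y, g n y ^ 2 * m y = t n ^ 2 * ∑' y, |v n y| ^ 2 * m y := by
      simpa only [hgdef] using l2_smul_sum m (fun y => |v n y|) (t n)
    have h2 : (fun y => |v n y| ^ 2 * m y) = fun y => v n y ^ 2 * m y := by
      funext y; rw [sq_abs]
    rw [h1, h2]
    calc t n ^ 2 * ∑' y, v n y ^ 2 * m y ≤ t n ^ 2 * E n :=
          mul_le_mul_of_nonneg_left (hl2E n) (sq_nonneg _)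
      _ = (4:ℝ)⁻¹ ^ n * (((n:ℝ)+1) ^ 2)⁻¹ := ht2 n
      _ ≤ (4:ℝ)⁻¹ ^ n := hquarter n
  -- energy facts for g
  have hvabs_en : ∀ n, FinEnergy b (fun y => |v n y|) := fun n =>
    Summable.of_nonneg_of_le (fun p => energy_term_nonneg b hb (fun y => |v n y|) p)
      (fun p => abs_energy_term_le b hb (v n) p) (hv n).2
  have hvabs_en_le : ∀ n, energy b (fun y => |v n y|) ≤ energy b (v n) := by
    intro n
    unfold energy
    have := Summable.tsum_le_tsum (abs_energy_term_le b hb (v n)) (hvabs_en n) (hv n).2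
    linarith
  have hgFE : ∀ n, FinEnergy b (g n) := by
    intro n
    simpa only [hgdef] using finEnergy_smul b (hvabs_en n) (t n)
  have hgEn : ∀ n, energy b (g n) ≤ (4:ℝ)⁻¹ ^ n := by
    intro n
    have h0 : energy b (g n) = t n ^ 2 * energy b (fun y => |v n y|) := by
      simpa only [hgdef] using energy_smul b (fun y => |v n y|) (t n)
    rw [h0]
    calc t n ^ 2 * energy b (fun y => |v n y|) ≤ t n ^ 2 * E n := by
          apply mul_le_mul_of_nonneg_left _ (sq_nonneg _)
          exact le_trans (hvabs_en_le n)
            (le_add_of_nonneg_right (l2sum_nonneg m hm (v n)))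
      _ = (4:ℝ)⁻¹ ^ n * (((n:ℝ)+1) ^ 2)⁻¹ := ht2 n
      _ ≤ (4:ℝ)⁻¹ ^ n := hquarter n
  -- pointwise largeness at xs n
  have hgx : ∀ n : ℕ, ((n:ℝ)+1) < g n (xs n) := by
    intro n
    have h2 : (((2:ℝ)^n * ((n:ℝ)+1)^2)^2 * E n) < v n (xs n) ^ 2 := hvx n
    have h1 : Real.sqrt (((2:ℝ)^n * ((n:ℝ)+1)^2)^2 * E n) < |v n (xs n)| := by
      have h3 := Real.sqrt_lt_sqrt (mul_nonneg (by positivity) (hE0 n)) h2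
      rwa [Real.sqrt_sq_eq_abs] at h3
    have h3 : Real.sqrt (((2:ℝ)^n * ((n:ℝ)+1)^2)^2 * E n)
        = (2:ℝ)^n * ((n:ℝ)+1)^2 * Real.sqrt (E n) := by
      rw [Real.sqrt_mul (by positivity), Real.sqrt_sq (by positivity)]
    show ((n:ℝ)+1) < t n * |v n (xs n)|
    have h4 := mul_lt_mul_of_pos_left h1 (ht n)
    have e1 : ((2:ℝ)^n) ≠ 0 := by positivity
    have e2 : ((n:ℝ)+1) ≠ 0 := by positivity
    have e3 : Real.sqrt (E n) ≠ 0 := (hsqrtE n).ne'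
    have h5 : t n * ((2:ℝ)^n * ((n:ℝ)+1)^2 * Real.sqrt (E n)) = (n:ℝ)+1 := by
      show ((2:ℝ) ^ n * ((n:ℝ)+1) * Real.sqrt (E n))⁻¹ * _ = _
      field_simp
    rw [h3, h5] at h4
    exact h4
  -- pointwise bounds
  have hptsq : ∀ n y, g n y ^ 2 ≤ (4:ℝ)⁻¹ ^ n / m y := by
    intro n y
    refine (eval_sq_le m hm (hgL2 n) y).trans ?_
    have := hm.pos y
    gcongr
    exact hgl2sum n
  have hpt : ∀ n y, g n y ≤ (2:ℝ)⁻¹ ^ n * (Real.sqrt (m y))⁻¹ := by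
    intro n y
    apply le_of_sq_le_sq' (by positivity)
    have h2 : ((2:ℝ)⁻¹ ^ n * (Real.sqrt (m y))⁻¹) ^ 2 = (4:ℝ)⁻¹ ^ n / m y := by
      have e1 : (Real.sqrt (m y))⁻¹ ^ 2 = (m y)⁻¹ := by
        rw [inv_pow, Real.sq_sqrt (hm.pos y).le]
      have e2 : ((2:ℝ)⁻¹) ^ 2 = (4:ℝ)⁻¹ := by norm_num
      rw [mul_pow, e1, ← pow_mul, mul_comm n 2, pow_mul, e2, div_eq_mul_inv]
    rw [h2]; exact hptsq n y
  have hsumg : ∀ y, Summable (fun n => g n y) := fun y =>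
    Summable.of_nonneg_of_le (fun n => hg0 n y) (fun n => hpt n y) (geo_half.mul_right _)
  set w : X → ℝ := fun y => ∑' n, g n y with hwdef
  have hw0 : ∀ y, 0 ≤ w y := fun y => tsum_nonneg (fun n => hg0 n y)
  have hsum2 : ∀ y, Summable (fun n => (2:ℝ) ^ n * g n y ^ 2) := by
    intro y
    refine Summable.of_nonneg_of_le (fun n => mul_nonneg (by positivity) (sq_nonneg _))
      (fun n => ?_) (geo_half.mul_right (m y)⁻¹)
    calc (2:ℝ)^n * g n y ^ 2 ≤ (2:ℝ)^n * ((4:ℝ)⁻¹ ^ n / m y) :=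
          mul_le_mul_of_nonneg_left (hptsq n y) (by positivity)
      _ = (2:ℝ)⁻¹ ^ n * (m y)⁻¹ := by rw [div_eq_mul_inv, ← mul_assoc, two_mul_quarter]
  have hcsw : ∀ y, w y ^ 2 ≤ 2 * ∑' n, (2:ℝ)^n * g n y ^ 2 :=
    fun y => (cs2 _ (fun n => hg0 n y) (hsum2 y)).2
  have hwL2 : MemL2 m w := by
    unfold MemL2
    apply summable_of_dom (fun y => w y ^ 2 * m y)
      (fun n y => (2*(2:ℝ)^n) * (g n y ^ 2 * m y)) (fun n => 2 * (2:ℝ)⁻¹ ^ n)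
    · intro y; exact mul_nonneg (sq_nonneg _) (hm.pos y).le
    · intro y
      have h1 := mul_le_mul_of_nonneg_right (hcsw y) (hm.pos y).le
      have h2 : ∑' n, (2*(2:ℝ)^n) * (g n y ^ 2 * m y)
          = (2 * m y) * ∑' n, (2:ℝ)^n * g n y ^ 2 := by
        rw [← tsum_mul_left]
        exact tsum_congr fun n => by ring
      rw [h2]
      nlinarith [(tsum_nonneg (fun n => mul_nonneg (show (0:ℝ) ≤ (2:ℝ)^n by positivity)
        (sq_nonneg (g n y))) : 0 ≤ ∑' n, (2:ℝ)^n * g n y ^ 2)]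
    · intro n y
      exact mul_nonneg (by positivity) (mul_nonneg (sq_nonneg _) (hm.pos y).le)
    · intro n; exact (hgL2 n).mul_left _
    · intro n
      rw [tsum_mul_left]
      calc (2*(2:ℝ)^n) * ∑' y, g n y ^ 2 * m y ≤ (2*(2:ℝ)^n) * (4:ℝ)⁻¹ ^ n :=
            mul_le_mul_of_nonneg_left (hgl2sum n) (by positivity)
        _ = 2 * (2:ℝ)⁻¹ ^ n := by rw [mul_assoc, two_mul_quarter]
    · exact geo_half.mul_left 2
    · intro y
      apply Summable.congr ((hsum2 y).mul_left (2 * m y))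
      intro n; ring
  -- energy of w
  have hsumd : ∀ p : X × X, Summable (fun n => |g n p.1 - g n p.2|) := by
    intro p
    refine Summable.of_nonneg_of_le (fun n => abs_nonneg _) (fun n => ?_)
      (geo_half.mul_right ((Real.sqrt (m p.1))⁻¹ + (Real.sqrt (m p.2))⁻¹))
    have h1 := hpt n p.1
    have h2 := hpt n p.2
    have h3 := hg0 n p.1
    have h4 := hg0 n p.2
    have hc : (2:ℝ)⁻¹^n * ((Real.sqrt (m p.1))⁻¹ + (Real.sqrt (m p.2))⁻¹)
        = (2:ℝ)⁻¹^n * (Real.sqrt (m p.1))⁻¹ + (2:ℝ)⁻¹^n * (Real.sqrt (m p.2))⁻¹ := by ring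
    rw [abs_sub_le_iff, hc]
    have h5 : (0:ℝ) ≤ (2:ℝ)⁻¹^n * (Real.sqrt (m p.1))⁻¹ := by positivity
    have h6 : (0:ℝ) ≤ (2:ℝ)⁻¹^n * (Real.sqrt (m p.2))⁻¹ := by positivity
    constructor <;> linarith
  have hsum2d : ∀ p : X × X, Summable (fun n => (2:ℝ)^n * |g n p.1 - g n p.2| ^ 2) := by
    intro p
    refine Summable.of_nonneg_of_le (fun n => mul_nonneg (by positivity) (sq_nonneg _))
      (fun n => ?_) (geo_half.mul_right (2*(m p.1)⁻¹ + 2*(m p.2)⁻¹))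
    have h1 := hptsq n p.1
    have h2 := hptsq n p.2
    calc (2:ℝ)^n * |g n p.1 - g n p.2| ^ 2
        ≤ (2:ℝ)^n * ((4:ℝ)⁻¹ ^ n * (2*(m p.1)⁻¹ + 2*(m p.2)⁻¹)) := by
          have hd : |g n p.1 - g n p.2| ^ 2 ≤ (4:ℝ)⁻¹ ^ n * (2*(m p.1)⁻¹ + 2*(m p.2)⁻¹) := by
            rw [sq_abs]
            have e1 : (4:ℝ)⁻¹ ^ n / m p.1 = (4:ℝ)⁻¹ ^ n * (m p.1)⁻¹ := div_eq_mul_inv _ _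
            have e2 : (4:ℝ)⁻¹ ^ n / m p.2 = (4:ℝ)⁻¹ ^ n * (m p.2)⁻¹ := div_eq_mul_inv _ _
            rw [e1] at h1; rw [e2] at h2
            nlinarith [sq_nonneg (g n p.1 + g n p.2)]
          have : (0:ℝ) ≤ (2:ℝ)^n := by positivity
          exact mul_le_mul_of_nonneg_left hd this
      _ = (2:ℝ)⁻¹ ^ n * (2*(m p.1)⁻¹ + 2*(m p.2)⁻¹) := by rw [← mul_assoc, two_mul_quarter]
  have hdw : ∀ p : X × X, w p.1 - w p.2 = ∑' n, (g n p.1 - g n p.2) :=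
    fun p => (Summable.tsum_sub (hsumg p.1) (hsumg p.2)).symm
  have hwsq : ∀ p : X × X, (w p.1 - w p.2) ^ 2 ≤ 2 * ∑' n, (2:ℝ)^n * (g n p.1 - g n p.2) ^ 2 := by
    intro p
    have hcs := (cs2 (fun n => |g n p.1 - g n p.2|) (fun n => abs_nonneg _) (hsum2d p)).2
    have hs : Summable fun n => ‖g n p.1 - g n p.2‖ := by
      simpa [Real.norm_eq_abs] using hsumd p
    have habs : |∑' n, (g n p.1 - g n p.2)| ≤ ∑' n, |g n p.1 - g n p.2| := by
      simpa [Real.norm_eq_abs] using norm_tsum_le_tsum_norm hs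
    rw [hdw p]
    have h1 : (∑' n, (g n p.1 - g n p.2)) ^ 2 ≤ (∑' n, |g n p.1 - g n p.2|) ^ 2 := by
      rw [← sq_abs (∑' n, (g n p.1 - g n p.2))]
      exact pow_le_pow_left₀ (abs_nonneg _) habs 2
    have h2 : ∑' n, (2:ℝ)^n * |g n p.1 - g n p.2| ^ 2
        = ∑' n, (2:ℝ)^n * (g n p.1 - g n p.2) ^ 2 :=
      tsum_congr fun n => by rw [sq_abs]
    rw [← h2]
    linarith
  have hwFE : FinEnergy b w := by
    unfold FinEnergy
    apply summable_of_dom _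
      (fun n (p : X × X) => (2*(2:ℝ)^n) * (b p.1 p.2 * (g n p.1 - g n p.2) ^ 2))
      (fun n => (4:ℝ) * (2:ℝ)⁻¹ ^ n)
    · intro p; exact energy_term_nonneg b hb w p
    · intro p
      have h1 := hwsq p
      have hb0 := hb.nonneg p.1 p.2
      have h2 : ∑' n, (2*(2:ℝ)^n) * (b p.1 p.2 * (g n p.1 - g n p.2) ^ 2)
          = (2 * b p.1 p.2) * ∑' n, (2:ℝ)^n * (g n p.1 - g n p.2) ^ 2 := by
        rw [← tsum_mul_left]
        exact tsum_congr fun n => by ring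
      rw [h2]
      nlinarith [(tsum_nonneg (fun n => mul_nonneg (show (0:ℝ) ≤ (2:ℝ)^n by positivity)
        (sq_nonneg (g n p.1 - g n p.2))) : 0 ≤ ∑' n, (2:ℝ)^n * (g n p.1 - g n p.2) ^ 2)]
    · intro n p
      exact mul_nonneg (by positivity) (energy_term_nonneg b hb (g n) p)
    · intro n; exact ((hgFE n)).mul_left _
    · intro n
      rw [tsum_mul_left]
      have hEg : (∑' p : X × X, b p.1 p.2 * (g n p.1 - g n p.2) ^ 2) = 2 * energy b (g n) := by
        unfold energy; ring
      rw [hEg]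
      calc (2*(2:ℝ)^n) * (2 * energy b (g n)) ≤ (2*(2:ℝ)^n) * (2 * (4:ℝ)⁻¹ ^ n) :=
            mul_le_mul_of_nonneg_left
              (mul_le_mul_of_nonneg_left (hgEn n) (by norm_num)) (by positivity)
        _ = 4 * ((2:ℝ)^n * (4:ℝ)⁻¹ ^ n) := by ring
        _ = 4 * (2:ℝ)⁻¹ ^ n := by rw [two_mul_quarter]
    · exact geo_half.mul_left 4
    · intro p
      apply Summable.congr ((hsum2d p).mul_left (2 * b p.1 p.2))
      intro n
      rw [sq_abs]
      ring
  -- conclusion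
  obtain ⟨M, hM⟩ := hcc w ⟨hwL2, hwFE⟩
  obtain ⟨n, hn⟩ := exists_nat_gt M
  have h1 : g n (xs n) ≤ w (xs n) := Summable.le_tsum (hsumg (xs n)) n (fun j _ => hg0 j (xs n))
  have h2 := hM (xs n)
  have h3 := hgx n
  rw [abs_of_nonneg (hw0 (xs n))] at h2
  linarith

end Embed
section Main

open Filter Topology

lemma poincare_normalize {X : Type*} (b : X → X → ℝ) (m : X → ℝ) (hb : IsGraph b) (hm : FinMeasure m)
    (hmpos : 0 < ∑' x, m x) (u : X → ℝ) (hu : MemDQ b m u) {C : ℝ} (hC : 0 < C)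
    (hlt : C * energy b u < ∑' x, (u x - mean m u) ^ 2 * m x) :
    ∃ w : X → ℝ, MemDQ b m w ∧ (∑' x, w x ^ 2 * m x = 1) ∧ (∑' x, w x * m x = 0) ∧
      energy b w < C⁻¹ := by
  set c := mean m u with hc
  set V := ∑' x, (u x - c) ^ 2 * m x with hV
  have hVpos : 0 < V := lt_of_le_of_lt (mul_nonneg hC.le (energy_nonneg b hb u)) hlt
  have hs : 0 < Real.sqrt V := Real.sqrt_pos.mpr hVpos
  have hsq : ((Real.sqrt V)⁻¹) ^ 2 = V⁻¹ := by rw [inv_pow, Real.sq_sqrt hVpos.le]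
  refine ⟨fun x => (Real.sqrt V)⁻¹ * (u x - c), ⟨?_, ?_⟩, ?_, ?_, ?_⟩
  · exact memL2_smul m (memL2_sub_const m hm hu.1 c) _
  · exact finEnergy_smul b (finEnergy_sub_const b hu.2 c) _
  · have h0 : ∑' x, ((Real.sqrt V)⁻¹ * (u x - c)) ^ 2 * m x
        = ((Real.sqrt V)⁻¹) ^ 2 * ∑' x, (u x - c) ^ 2 * m x :=
      l2_smul_sum m (fun x => u x - c) _
    rw [h0, hsq, ← hV]
    exact inv_mul_cancel₀ hVpos.ne'
  · have h1 : (fun x => ((Real.sqrt V)⁻¹ * (u x - c)) * m x)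
        = fun x => (Real.sqrt V)⁻¹ * (u x * m x - c * m x) := by
      funext x; ring
    rw [h1, tsum_mul_left,
      Summable.tsum_sub (summable_mul_m m hm hu.1) (hm.summable.mul_left c), tsum_mul_left]
    rw [hc]
    unfold mean
    rw [div_mul_cancel₀ _ hmpos.ne', sub_self, mul_zero]
  · have h0 : energy b (fun x => (Real.sqrt V)⁻¹ * (u x - c))
        = ((Real.sqrt V)⁻¹) ^ 2 * energy b (fun x => u x - c) :=
      energy_smul b (fun x => u x - c) _
    rw [h0, energy_sub_const, hsq]
    have hE0 := energy_nonneg b hb u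
    have h2 : energy b u < V / C := by rw [lt_div_iff₀ hC]; linarith [hlt]
    calc V⁻¹ * energy b u < V⁻¹ * (V / C) :=
          mul_lt_mul_of_pos_left h2 (inv_pos.mpr hVpos)
      _ = C⁻¹ := by field_simp

/-- Poincaré inequality `‖u - ū‖₂² ≤ C Q(u)` for `u ∈ D(Q)`. -/
theorem stmt3 {X : Type*} [Countable X] (b : X → X → ℝ) (m : X → ℝ)
    (hb : IsGraph b) (hconn : GraphConnected b) (hm : FinMeasure m)
    (hcc : CanCompact b m) :
    ∃ C > (0 : ℝ), ∀ u : X → ℝ, MemDQ b m u →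
      (∑' x, (u x - mean m u) ^ 2 * m x) ≤ C * energy b u := by
  rcases isEmpty_or_nonempty X with hX | hX
  · refine ⟨1, one_pos, fun u hu => ?_⟩
    have h1 : (∑' x, (u x - mean m u) ^ 2 * m x) = 0 := tsum_empty
    have h2 : energy b u = (1/2) * 0 := by unfold energy; rw [tsum_empty]
    rw [h1, h2]
    norm_num
  obtain ⟨o⟩ := hX
  have hmpos : 0 < ∑' x, m x :=
    lt_of_lt_of_le (hm.pos o) (Summable.le_tsum hm.summable o (fun j _ => (hm.pos j).le))
  obtain ⟨K, hKpos, hKem⟩ := embed b m hb hm hcc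
  by_contra hC
  push_neg at hC
  have hsel : ∀ n : ℕ, ∃ w : X → ℝ, MemDQ b m w ∧ (∑' x, w x ^ 2 * m x = 1) ∧
      (∑' x, w x * m x = 0) ∧ energy b w < (((n:ℝ)+1))⁻¹ := by
    intro n
    obtain ⟨u, hu, hlt⟩ := hC ((n:ℝ)+1) (by positivity)
    exact poincare_normalize b m hb hm hmpos u hu (by positivity) hlt
  choose w hwDQ hwl2 hwmean hwen using hsel
  -- uniform sup bound
  set M := Real.sqrt (2 * K) with hMdef
  have hM0 : 0 ≤ M := Real.sqrt_nonneg _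
  have hwsup : ∀ n x, |w n x| ≤ M := by
    intro n x
    have h1 := hKem (w n) (hwDQ n) x
    have hinv1 : (((n:ℝ)+1))⁻¹ ≤ 1 := by
      rw [inv_le_one_iff₀]; right
      have : (0:ℝ) ≤ (n:ℝ) := by positivity
      linarith
    have h2 : energy b (w n) + ∑' y, w n y ^ 2 * m y ≤ 2 := by
      rw [hwl2 n]
      have := hwen n
      linarith
    have h3 : w n x ^ 2 ≤ K * 2 := le_trans h1 (mul_le_mul_of_nonneg_left h2 hKpos.le)
    apply le_of_sq_le_sq' hM0
    rw [sq_abs, hMdef, Real.sq_sqrt (by positivity)]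
    linarith
  -- ultrafilter limit
  have hne : (atTop : Filter ℕ).NeBot := atTop_neBot
  set F : Ultrafilter ℕ := @Ultrafilter.of ℕ atTop hne with hFdef
  have hFle : (F : Filter ℕ) ≤ atTop := Ultrafilter.of_le atTop
  have hlim : ∀ x, ∃ L : ℝ, |L| ≤ M ∧ Tendsto (fun n => w n x) (F : Filter ℕ) (nhds L) :=
    fun x => ultra_lim F (fun n => w n x) (fun n => hwsup n x)
  choose L hLb hLt using hlim
  -- edges force equality of limits
  have hedge : ∀ x y, 0 < b x y → L x = L y := by
    intro x y hxy
    have h1 : Tendsto (fun n => b x y * (w n x - w n y) ^ 2) (F : Filter ℕ)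
        (nhds (b x y * (L x - L y) ^ 2)) :=
      (((hLt x).sub (hLt y)).pow 2).const_mul _
    have h2 : ∀ n : ℕ, b x y * (w n x - w n y) ^ 2 ≤ 2 * (((n:ℝ)+1))⁻¹ := by
      intro n
      have h3 := term_le_two_energy b hb (hwDQ n).2 x y
      have h4 := hwen n
      linarith
    have h3 : Tendsto (fun n : ℕ => 2 * (((n:ℝ)+1))⁻¹) atTop (nhds 0) := by
      have h4 := tendsto_one_div_add_atTop_nhds_zero_nat.const_mul (2:ℝ)
      simp only [mul_zero] at h4
      convert h4 using 2 with n
      rw [one_div]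
    have h5 := le_of_tendsto_of_tendsto' h1 (h3.mono_left hFle) h2
    have h6 : 0 ≤ b x y * (L x - L y) ^ 2 := mul_nonneg (hb.nonneg x y) (sq_nonneg _)
    have h7 : b x y * (L x - L y) ^ 2 = 0 := le_antisymm h5 h6
    rcases mul_eq_zero.mp h7 with h | h
    · exact absurd h hxy.ne'
    · have := sq_eq_zero_iff.mp h
      linarith
  -- connectedness: L is constant
  have hconst : ∀ x, L x = L o := by
    intro x
    induction hconn x o with
    | refl => rfl
    | tail _ hst ih => exact ih.trans (hedge _ _ hst)
  -- summability of w n * m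
  have hwm : ∀ n, Summable (fun x => w n x * m x) := fun n => summable_mul_m m hm (hwDQ n).1
  -- step (b): L o = 0
  have hkey : ∀ ε : ℝ, 0 < ε → |L o| * (∑' x, m x) ≤ M * ε + |L o| * ε := by
    intro ε hε
    obtain ⟨S, hS⟩ := tail_small hm.summable hε
    have hSm : ∑' x : {x // x ∉ S}, m x ≤ ε := ((abs_lt.mp hS).2).le
    have hSm0 : 0 ≤ ∑' x : {x // x ∉ S}, m x :=
      tsum_nonneg fun x => (hm.pos _).le
    have hsplitm : ∑ x ∈ S, m x + ∑' x : {x // x ∉ S}, m x = ∑' x, m x :=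
      Summable.sum_add_tsum_subtype_compl hm.summable S
    have hn1 : ∀ n, |∑ x ∈ S, w n x * m x| ≤ M * ε := by
      intro n
      have h1 : ∑ x ∈ S, w n x * m x + ∑' x : {x // x ∉ S}, w n x * m x
          = ∑' x, w n x * m x := Summable.sum_add_tsum_subtype_compl (hwm n) S
      rw [hwmean n] at h1
      have hs1 : Summable (fun x : {x // x ∉ S} => w n (x : X) * m (x : X)) :=
        (hwm n).subtype _
      have h2 : |∑' x : {x // x ∉ S}, w n x * m x| ≤ M * ε := by
        have habs : Summable (fun x : {x // x ∉ S} => |w n (x : X) * m (x : X)|) :=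
          summable_abs_iff.mpr hs1
        calc |∑' x : {x // x ∉ S}, w n x * m x|
            ≤ ∑' x : {x // x ∉ S}, |w n (x : X) * m (x : X)| := by
              simpa only [Real.norm_eq_abs] using
                norm_tsum_le_tsum_norm (f := fun x : {x // x ∉ S} => w n (x:X) * m (x:X))
                  (by simpa only [Real.norm_eq_abs] using habs)
          _ ≤ ∑' x : {x // x ∉ S}, M * m (x : X) := by
              refine Summable.tsum_le_tsum (fun x => ?_) habs ((hm.summable.subtype _).mul_left M)
              rw [abs_mul, abs_of_pos (hm.pos _)]
              exact mul_le_mul_of_nonneg_right (hwsup n _) (hm.pos _).le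
          _ = M * ∑' x : {x // x ∉ S}, m (x : X) := tsum_mul_left
          _ ≤ M * ε := mul_le_mul_of_nonneg_left hSm hM0
      have h3 : ∑ x ∈ S, w n x * m x = -(∑' x : {x // x ∉ S}, w n x * m x) := by
        linarith
      rw [h3, abs_neg]
      exact h2
    have hlim1 : Tendsto (fun n => ∑ x ∈ S, w n x * m x) (F : Filter ℕ)
        (nhds (∑ x ∈ S, L x * m x)) :=
      tendsto_finset_sum S (fun x _ => (hLt x).mul_const (m x))
    have h4 : |∑ x ∈ S, L x * m x| ≤ M * ε := le_of_tendsto' hlim1.abs hn1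
    have h5 : ∑ x ∈ S, L x * m x = L o * ∑ x ∈ S, m x := by
      rw [Finset.mul_sum]
      exact Finset.sum_congr rfl fun x _ => by rw [hconst x]
    have hSm1 : 0 ≤ ∑ x ∈ S, m x := Finset.sum_nonneg fun x _ => (hm.pos x).le
    rw [h5, abs_mul, abs_of_nonneg hSm1] at h4
    calc |L o| * (∑' x, m x)
        = |L o| * (∑ x ∈ S, m x) + |L o| * (∑' x : {x // x ∉ S}, m x) := by
          rw [← hsplitm]; ring
      _ ≤ M * ε + |L o| * ε :=
          add_le_add h4 (mul_le_mul_of_nonneg_left hSm (abs_nonneg _))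
  have hκ : L o = 0 := by
    by_contra hne0
    have habs : 0 < |L o| := abs_pos.mpr hne0
    have hP : 0 < |L o| * (∑' x, m x) := mul_pos habs hmpos
    have hD : (0:ℝ) < 2 * (M + |L o| + 1) := by positivity
    set ε := (|L o| * (∑' x, m x)) / (2 * (M + |L o| + 1)) with hεdef
    have hεpos : 0 < ε := div_pos hP hD
    have hεeq : ε * (2 * (M + |L o| + 1)) = |L o| * (∑' x, m x) :=
      div_mul_cancel₀ _ hD.ne'
    have h7 := hkey ε hεpos
    nlinarith [mul_nonneg hM0 hεpos.le, mul_nonneg (abs_nonneg (L o)) hεpos.le]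
  have hL0 : ∀ x, L x = 0 := fun x => (hconst x).trans hκ
  -- step (c): contradiction with norm 1
  have hε2 : (0:ℝ) < 1 / (2 * (M ^ 2 + 1)) := by positivity
  obtain ⟨S, hS⟩ := tail_small hm.summable hε2
  have hSm : ∑' x : {x // x ∉ S}, m x ≤ 1 / (2 * (M ^ 2 + 1)) := ((abs_lt.mp hS).2).le
  have hlower : ∀ n, 1 - M ^ 2 * (1 / (2 * (M ^ 2 + 1))) ≤ ∑ x ∈ S, w n x ^ 2 * m x := by
    intro n
    have h1 : ∑ x ∈ S, w n x ^ 2 * m x + ∑' x : {x // x ∉ S}, w n x ^ 2 * m x = 1 := by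
      rw [← hwl2 n]
      exact Summable.sum_add_tsum_subtype_compl (hwDQ n).1 S
    have hs1 : Summable (fun x : {x // x ∉ S} => w n (x : X) ^ 2 * m (x : X)) :=
      ((hwDQ n).1).subtype _
    have h2 : ∑' x : {x // x ∉ S}, w n x ^ 2 * m x ≤ M ^ 2 * (1 / (2 * (M ^ 2 + 1))) := by
      calc ∑' x : {x // x ∉ S}, w n x ^ 2 * m x
          ≤ ∑' x : {x // x ∉ S}, M ^ 2 * m (x : X) := by
            refine Summable.tsum_le_tsum (fun x => ?_) hs1 ((hm.summable.subtype _).mul_left _)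
            refine mul_le_mul_of_nonneg_right ?_ (hm.pos _).le
            rw [← sq_abs]
            exact pow_le_pow_left₀ (abs_nonneg _) (hwsup n _) 2
        _ = M ^ 2 * ∑' x : {x // x ∉ S}, m (x : X) := tsum_mul_left
        _ ≤ M ^ 2 * (1 / (2 * (M ^ 2 + 1))) :=
            mul_le_mul_of_nonneg_left hSm (by positivity)
    linarith
  have hlim2 : Tendsto (fun n => ∑ x ∈ S, w n x ^ 2 * m x) (F : Filter ℕ)
      (nhds (∑ x ∈ S, L x ^ 2 * m x)) :=
    tendsto_finset_sum S (fun x _ => ((hLt x).pow 2).mul_const _)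
  have h8 : ∑ x ∈ S, L x ^ 2 * m x = 0 :=
    Finset.sum_eq_zero fun x _ => by rw [hL0 x]; ring
  have h9 : 1 - M ^ 2 * (1 / (2 * (M ^ 2 + 1))) ≤ 0 := by
    rw [← h8]
    exact ge_of_tendsto' hlim2 hlower
  have hD : (0:ℝ) < 2 * (M ^ 2 + 1) := by positivity
  have h10 : (1 / (2 * (M ^ 2 + 1))) * (2 * (M ^ 2 + 1)) = 1 :=
    one_div_mul_cancel hD.ne'
  nlinarith [sq_nonneg M]

end Main
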